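/- arXiv:math/0311396 — 4 statements merged into one kernel-verified Lean document; each statement's English description precedes it below -/
import Mathlib

section
/- For a digroup G, the set ↼L_G = { ↼L_a : a ∈ G } is a subgroup of the monoid of maps G → G under composition; the group inverse of ↼L_a is ↼L_{a⁻}. -/
/-- A digroup: two diassociative products, a bar-unit `e`, and Liu inverses. -/
structure Digroup (G : Type*) where
  lp : G → G → G   -- left product ⇀·
  rp : G → G → G   -- right product ↼·
  e : G
  inv : G → G      -- Liu inverse
  d1 : ∀ x y z, lp x (lp y z) = lp (lp x y) z
  d2 : ∀ x y z, lp (lp x y) z = lp x (rp y z)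
  d3 : ∀ x y z, lp (rp x y) z = rp x (lp y z)
  d4 : ∀ x y z, rp (lp x y) z = rp (rp x y) z
  d5 : ∀ x y z, rp (rp x y) z = rp x (rp y z)
  lp_e : ∀ x, lp x e = x
  e_rp : ∀ x, rp e x = x
  rp_e : ∀ x, rp x e = lp e x
  inv_lp : ∀ x, lp (inv x) x = e
  rp_inv : ∀ x, rp x (inv x) = e

/-- Left translation by the left product: ⇀L_a. -/
def Digroup.lL {G : Type*} (D : Digroup G) (a : G) : G → G := fun x => D.lp a x

/-- Left translation by the right product: ↼L_a. -/
def Digroup.rL {G : Type*} (D : Digroup G) (a : G) : G → G := fun x => D.rp a x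

theorem rL_set_is_subgroup {G : Type*} (D : Digroup G) :
    (id ∈ {f : G → G | ∃ a, f = D.rL a}) ∧
    (∀ f ∈ {f : G → G | ∃ a, f = D.rL a}, ∀ g ∈ {f : G → G | ∃ a, f = D.rL a},
      f ∘ g ∈ {f : G → G | ∃ a, f = D.rL a}) ∧
    (∀ a : G, D.rL (D.inv a) ∈ {f : G → G | ∃ a, f = D.rL a} ∧
      D.rL (D.inv a) ∘ D.rL a = id ∧ D.rL a ∘ D.rL (D.inv a) = id) := by
  refine ⟨⟨D.e, ?_⟩, ?_, ?_⟩
  · funext x; simp [Digroup.rL, D.e_rp]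
  · rintro f ⟨a, rfl⟩ g ⟨b, rfl⟩
    exact ⟨D.rp a b, by funext x; simp [Digroup.rL, Function.comp, D.d5]⟩
  · intro a
    refine ⟨⟨D.inv a, rfl⟩, ?_, ?_⟩
    · funext x
      simp [Digroup.rL, Function.comp, ← D.d5, ← D.d4, D.inv_lp, D.e_rp]
    · funext x
      simp [Digroup.rL, Function.comp, ← D.d5, D.rp_inv, D.e_rp]
end

section
/- For a digroup G, the map φ : ⇀L_G → ↼L_G defined by φ(⇀L_a) = ↼L_a is well-defined and is a semigroup homomorphism: φ(⇀L_a ∘ ⇀L_b) = φ(⇀L_a) ∘ φ(⇀L_b). -/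
theorem phi_well_defined_and_hom {G : Type*} (D : Digroup G) :
    (∀ a b : G, D.lL a = D.lL b → D.rL a = D.rL b) ∧
    (∀ a b : G, D.lL a ∘ D.lL b = D.lL (D.lp a b) ∧
      D.rL (D.lp a b) = D.rL a ∘ D.rL b) := by
  constructor
  · intro a b h
    have : a = b := by
      have := congrFun h D.e
      simpa [Digroup.lL, D.lp_e] using this
    rw [this]
  · intro a b
    constructor
    · funext x
      simp [Digroup.lL, Function.comp, D.d1]
    · funext x
      simp [Digroup.rL, Function.comp, D.d4, D.d5]
end

section
/- Given a digroup G, the product set ↼L_G × ⇀L_G with operations (↼L_a, ⇀L_b) ⇀· (↼L_c, ⇀L_d) = (↼L_{a⇀·c}, ⇀L_{b⇀·d}) and (↼L_a, ⇀L_b) ↼· (↼L_c, ⇀L_d) = (↼L_{a↼·c}, ⇀L_{b↼·d}) is a digroup with identity (↼L_e, ⇀L_e), and the Liu inverse of (↼L_a, ⇀L_b) is (↼L_{a⁻}, ⇀L_{b⁻}). -/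
namespace Digroup

variable {G : Type*} (D : Digroup G)

lemma rL_lp (a c : G) : D.rL (D.lp a c) = D.rL a ∘ D.rL c := by
  funext x; simp only [rL, Function.comp]; rw [D.d4, D.d5]

lemma rL_rp (a c : G) : D.rL (D.rp a c) = D.rL a ∘ D.rL c := by
  funext x; simp only [rL, Function.comp]; rw [D.d5]

lemma lL_lp (b d : G) : D.lL (D.lp b d) = D.lL b ∘ D.lL d := by
  funext x; simp only [lL, Function.comp]; rw [D.d1]

lemma rL_e : D.rL D.e = id := by funext x; simp [rL, D.e_rp]

lemma lL_inj {b b' : G} (h : D.lL b = D.lL b') : b = b' := by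
  have h1 := congrFun h D.e
  simpa [lL, D.lp_e] using h1

lemma rL_inv_comp (a : G) : D.rL (D.inv a) ∘ D.rL a = id := by
  funext x
  simp only [rL, Function.comp, id]
  rw [← D.d5, ← D.d4, D.inv_lp, D.e_rp]

lemma rL_comp_inv (a : G) : D.rL a ∘ D.rL (D.inv a) = id := by
  funext x
  simp only [rL, Function.comp, id]
  rw [← D.d5, D.rp_inv, D.e_rp]

lemma rL_inv_congr {a a' : G} (h : D.rL a = D.rL a') :
    D.rL (D.inv a) = D.rL (D.inv a') := by
  calc D.rL (D.inv a) = (D.rL (D.inv a') ∘ D.rL a') ∘ D.rL (D.inv a) := by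
        rw [rL_inv_comp, Function.id_comp]
      _ = D.rL (D.inv a') ∘ (D.rL a ∘ D.rL (D.inv a)) := by rw [← h]; rfl
      _ = D.rL (D.inv a') := by rw [rL_comp_inv, Function.comp_id]

/-- The carrier of the product digroup. -/
def DS (D : Digroup G) := {p : (G → G) × (G → G) // ∃ a b, p = (D.rL a, D.lL b)}

noncomputable def w1 (p : D.DS) : G := p.2.choose
noncomputable def w2 (p : D.DS) : G := p.2.choose_spec.choose

lemma wspec (p : D.DS) : p.1 = (D.rL (D.w1 p), D.lL (D.w2 p)) :=
  p.2.choose_spec.choose_spec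

lemma wspec1 (p : D.DS) : p.1.1 = D.rL (D.w1 p) := by rw [wspec]
lemma wspec2 (p : D.DS) : p.1.2 = D.lL (D.w2 p) := by rw [wspec]

noncomputable def lpS (p q : D.DS) : D.DS :=
  ⟨(D.rL (D.lp (D.w1 p) (D.w1 q)), D.lL (D.lp (D.w2 p) (D.w2 q))), _, _, rfl⟩

noncomputable def rpS (p q : D.DS) : D.DS :=
  ⟨(D.rL (D.rp (D.w1 p) (D.w1 q)), D.lL (D.rp (D.w2 p) (D.w2 q))), _, _, rfl⟩

def eS : D.DS := ⟨(D.rL D.e, D.lL D.e), _, _, rfl⟩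

noncomputable def invS (p : D.DS) : D.DS :=
  ⟨(D.rL (D.inv (D.w1 p)), D.lL (D.inv (D.w2 p))), _, _, rfl⟩

lemma lpS_fst (p q : D.DS) : (D.lpS p q).1.1 = D.rL (D.lp (D.w1 p) (D.w1 q)) := rfl
lemma lpS_snd (p q : D.DS) : (D.lpS p q).1.2 = D.lL (D.lp (D.w2 p) (D.w2 q)) := rfl
lemma rpS_fst (p q : D.DS) : (D.rpS p q).1.1 = D.rL (D.rp (D.w1 p) (D.w1 q)) := rfl
lemma rpS_snd (p q : D.DS) : (D.rpS p q).1.2 = D.lL (D.rp (D.w2 p) (D.w2 q)) := rfl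
lemma eS_fst : (D.eS).1.1 = D.rL D.e := rfl
lemma eS_snd : (D.eS).1.2 = D.lL D.e := rfl
lemma invS_fst (p : D.DS) : (D.invS p).1.1 = D.rL (D.inv (D.w1 p)) := rfl
lemma invS_snd (p : D.DS) : (D.invS p).1.2 = D.lL (D.inv (D.w2 p)) := rfl

lemma w1_lpS (p q : D.DS) :
    D.rL (D.w1 (D.lpS p q)) = D.rL (D.w1 p) ∘ D.rL (D.w1 q) := by
  rw [← wspec1, lpS_fst, rL_lp]

lemma w1_rpS (p q : D.DS) :
    D.rL (D.w1 (D.rpS p q)) = D.rL (D.w1 p) ∘ D.rL (D.w1 q) := by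
  rw [← wspec1, rpS_fst, rL_rp]

lemma w1_eS : D.rL (D.w1 D.eS) = id := by rw [← wspec1, eS_fst, rL_e]

lemma w1_invS (p : D.DS) :
    D.rL (D.w1 (D.invS p)) = D.rL (D.inv (D.w1 p)) := by rw [← wspec1, invS_fst]

lemma w2_lpS (p q : D.DS) : D.w2 (D.lpS p q) = D.lp (D.w2 p) (D.w2 q) :=
  D.lL_inj ((D.wspec2 (D.lpS p q)).symm.trans (D.lpS_snd p q))

lemma w2_rpS (p q : D.DS) : D.w2 (D.rpS p q) = D.rp (D.w2 p) (D.w2 q) :=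
  D.lL_inj ((D.wspec2 (D.rpS p q)).symm.trans (D.rpS_snd p q))

lemma w2_eS : D.w2 D.eS = D.e := D.lL_inj ((D.wspec2 D.eS).symm.trans D.eS_snd)

lemma w2_invS (p : D.DS) : D.w2 (D.invS p) = D.inv (D.w2 p) :=
  D.lL_inj ((D.wspec2 (D.invS p)).symm.trans (D.invS_snd p))

lemma dsext {p q : D.DS} (h1 : p.1.1 = q.1.1) (h2 : p.1.2 = q.1.2) : p = q :=
  Subtype.ext (Prod.ext h1 h2)

noncomputable def prodDigroup : Digroup D.DS where
  lp := D.lpS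
  rp := D.rpS
  e := D.eS
  inv := D.invS
  d1 := fun p q r => D.dsext
    (by simp only [lpS_fst, rL_lp, w1_lpS]; rfl)
    (by simp only [lpS_snd, w2_lpS]; exact congrArg D.lL (D.d1 _ _ _))
  d2 := fun p q r => D.dsext
    (by simp only [lpS_fst, rpS_fst, rL_lp, w1_lpS, w1_rpS]; rfl)
    (by simp only [lpS_snd, rpS_snd, w2_lpS, w2_rpS]
        exact congrArg D.lL (D.d2 _ _ _))
  d3 := fun p q r => D.dsext
    (by simp only [lpS_fst, rpS_fst, rL_lp, rL_rp, w1_lpS, w1_rpS]; rfl)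
    (by simp only [lpS_snd, rpS_snd, w2_lpS, w2_rpS]
        exact congrArg D.lL (D.d3 _ _ _))
  d4 := fun p q r => D.dsext
    (by simp only [lpS_fst, rpS_fst, rL_lp, rL_rp, w1_lpS, w1_rpS])
    (by simp only [lpS_snd, rpS_snd, w2_lpS, w2_rpS]
        exact congrArg D.lL (D.d4 _ _ _))
  d5 := fun p q r => D.dsext
    (by simp only [rpS_fst, rL_rp, w1_rpS]; rfl)
    (by simp only [rpS_snd, w2_rpS]; exact congrArg D.lL (D.d5 _ _ _))
  lp_e := fun p => D.dsext
    (by simp only [lpS_fst, rL_lp, w1_lpS, w1_eS, Function.comp_id, wspec1])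
    (by simp only [lpS_snd, w2_lpS, w2_eS, D.lp_e, wspec2])
  e_rp := fun p => D.dsext
    (by simp only [rpS_fst, rL_rp, w1_rpS, w1_eS, Function.id_comp, wspec1])
    (by simp only [rpS_snd, w2_rpS, w2_eS, D.e_rp, wspec2])
  rp_e := fun p => D.dsext
    (by simp only [rpS_fst, lpS_fst, rL_rp, rL_lp, w1_eS, Function.comp_id,
          Function.id_comp])
    (by simp only [rpS_snd, lpS_snd, w2_eS, D.rp_e])
  inv_lp := fun p => D.dsext
    (by simp only [lpS_fst, eS_fst, rL_lp, w1_invS, rL_inv_comp, rL_e])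
    (by simp only [lpS_snd, eS_snd, w2_invS, D.inv_lp])
  rp_inv := fun p => D.dsext
    (by simp only [rpS_fst, eS_fst, rL_rp, w1_invS, rL_comp_inv, rL_e])
    (by simp only [rpS_snd, eS_snd, w2_invS, D.rp_inv])

lemma wit1 (p : D.DS) {a b : G} (h : p.1 = (D.rL a, D.lL b)) :
    D.rL (D.w1 p) = D.rL a :=
  (D.wspec1 p).symm.trans (congrArg Prod.fst h)

lemma wit2 (p : D.DS) {a b : G} (h : p.1 = (D.rL a, D.lL b)) :
    D.w2 p = b :=
  D.lL_inj ((D.wspec2 p).symm.trans (congrArg Prod.snd h))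

end Digroup

theorem product_of_translation_sets_is_digroup {G : Type*} (D : Digroup G) :
    ∃ D' : Digroup {p : (G → G) × (G → G) // ∃ a b, p = (D.rL a, D.lL b)},
      (∀ a b c d : G,
        D'.lp ⟨(D.rL a, D.lL b), ⟨a, b, rfl⟩⟩ ⟨(D.rL c, D.lL d), ⟨c, d, rfl⟩⟩ =
          ⟨(D.rL (D.lp a c), D.lL (D.lp b d)), ⟨_, _, rfl⟩⟩) ∧
      (∀ a b c d : G,
        D'.rp ⟨(D.rL a, D.lL b), ⟨a, b, rfl⟩⟩ ⟨(D.rL c, D.lL d), ⟨c, d, rfl⟩⟩ =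
          ⟨(D.rL (D.rp a c), D.lL (D.rp b d)), ⟨_, _, rfl⟩⟩) ∧
      D'.e = ⟨(D.rL D.e, D.lL D.e), ⟨_, _, rfl⟩⟩ ∧
      (∀ a b : G,
        D'.inv ⟨(D.rL a, D.lL b), ⟨a, b, rfl⟩⟩ =
          ⟨(D.rL (D.inv a), D.lL (D.inv b)), ⟨_, _, rfl⟩⟩) := by
  refine ⟨D.prodDigroup, ?_, ?_, rfl, ?_⟩
  · intro a b c d
    apply D.dsext
    · show D.rL (D.lp _ _) = D.rL (D.lp a c)
      rw [D.rL_lp, D.rL_lp, D.wit1 (⟨(D.rL a, D.lL b), a, b, rfl⟩ : {p : (G → G) × (G → G) // ∃ a b, p = (D.rL a, D.lL b)}) rfl, D.wit1 (⟨(D.rL c, D.lL d), c, d, rfl⟩ : {p : (G → G) × (G → G) // ∃ a b, p = (D.rL a, D.lL b)}) rfl]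
    · show D.lL (D.lp _ _) = D.lL (D.lp b d)
      rw [D.wit2 (⟨(D.rL a, D.lL b), a, b, rfl⟩ : {p : (G → G) × (G → G) // ∃ a b, p = (D.rL a, D.lL b)}) rfl,
        D.wit2 (⟨(D.rL c, D.lL d), c, d, rfl⟩ : {p : (G → G) × (G → G) // ∃ a b, p = (D.rL a, D.lL b)}) rfl]
  · intro a b c d
    apply D.dsext
    · show D.rL (D.rp _ _) = D.rL (D.rp a c)
      rw [D.rL_rp, D.rL_rp, D.wit1 (⟨(D.rL a, D.lL b), a, b, rfl⟩ : {p : (G → G) × (G → G) // ∃ a b, p = (D.rL a, D.lL b)}) rfl, D.wit1 (⟨(D.rL c, D.lL d), c, d, rfl⟩ : {p : (G → G) × (G → G) // ∃ a b, p = (D.rL a, D.lL b)}) rfl]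
    · show D.lL (D.rp _ _) = D.lL (D.rp b d)
      rw [D.wit2 (⟨(D.rL a, D.lL b), a, b, rfl⟩ : {p : (G → G) × (G → G) // ∃ a b, p = (D.rL a, D.lL b)}) rfl,
        D.wit2 (⟨(D.rL c, D.lL d), c, d, rfl⟩ : {p : (G → G) × (G → G) // ∃ a b, p = (D.rL a, D.lL b)}) rfl]
  · intro a b
    apply D.dsext
    · show D.rL (D.inv _) = D.rL (D.inv a)
      exact D.rL_inv_congr (D.wit1 _ (rfl : (_ : (_ × _)) = (D.rL a, D.lL b)))
    · show D.lL (D.inv _) = D.lL (D.inv b)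
      rw [D.wit2 (⟨(D.rL a, D.lL b), a, b, rfl⟩ : {p : (G → G) × (G → G) // ∃ a b, p = (D.rL a, D.lL b)}) rfl]
end

section
/- Let (S, G, φ) be a standard triple on a set Ω. Then G × S with operations (α, f) ⇀· (β, g) = (αβ, fg) and (α, f) ↼· (β, g) = (αβ, φ(f)g) is a digroup with identity (1, e_S), and the Liu inverse of (α, f) is (α⁻¹, f^{ℓ-1}). -/
/-- A standard triple on a set `Ω`: a subgroup `G`, a subsemigroup `S` with
right unit `eS` and left inverses `linv`, and a map `φ : S → G`. -/
structure StandardTriple (Ω : Type*) where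
  S : Set (Ω → Ω)
  G : Set (Ω → Ω)
  φ : (Ω → Ω) → (Ω → Ω)
  eS : Ω → Ω
  linv : (Ω → Ω) → (Ω → Ω)
  ginv : (Ω → Ω) → (Ω → Ω)
  G_id : id ∈ G
  G_comp : ∀ f ∈ G, ∀ g ∈ G, f ∘ g ∈ G
  G_inv_mem : ∀ f ∈ G, ginv f ∈ G
  G_inv_left : ∀ f ∈ G, ginv f ∘ f = id
  G_inv_right : ∀ f ∈ G, f ∘ ginv f = id
  S_comp : ∀ f ∈ S, ∀ g ∈ S, f ∘ g ∈ S
  eS_mem : eS ∈ S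
  right_unit : ∀ f ∈ S, f ∘ eS = f
  linv_mem : ∀ f ∈ S, linv f ∈ S
  linv_left : ∀ f ∈ S, linv f ∘ f = eS
  φ_mem : ∀ f ∈ S, φ f ∈ G
  φ_comp : ∀ f ∈ S, ∀ g ∈ S, φ (f ∘ g) = φ f ∘ φ g
  φS_S : ∀ f ∈ S, ∀ g ∈ S, φ f ∘ g ∈ S
  φ_eS : ∀ f ∈ S, φ eS ∘ f = f
  eS_comm : ∀ f ∈ S, eS ∘ f = φ f ∘ eS
  φ_linv : ∀ f ∈ S, φ f ∘ linv f = eS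
  comp_φ : ∀ f ∈ S, ∀ g ∈ S, f ∘ φ g = f ∘ g
  φ_φ : ∀ f ∈ S, ∀ g ∈ S, φ (φ f ∘ g) = φ f ∘ φ g

theorem standard_triple_gives_digroup {Ω : Type*} (T : StandardTriple Ω) :
    ∃ D : Digroup {p : (Ω → Ω) × (Ω → Ω) // p.1 ∈ T.G ∧ p.2 ∈ T.S},
      (∀ (α f β g) (hα : α ∈ T.G) (hf : f ∈ T.S) (hβ : β ∈ T.G) (hg : g ∈ T.S),
        D.lp ⟨(α, f), ⟨hα, hf⟩⟩ ⟨(β, g), ⟨hβ, hg⟩⟩ =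
          ⟨(α ∘ β, f ∘ g), ⟨T.G_comp α hα β hβ, T.S_comp f hf g hg⟩⟩) ∧
      (∀ (α f β g) (hα : α ∈ T.G) (hf : f ∈ T.S) (hβ : β ∈ T.G) (hg : g ∈ T.S),
        D.rp ⟨(α, f), ⟨hα, hf⟩⟩ ⟨(β, g), ⟨hβ, hg⟩⟩ =
          ⟨(α ∘ β, T.φ f ∘ g), ⟨T.G_comp α hα β hβ, T.φS_S f hf g hg⟩⟩) ∧
      D.e = ⟨(id, T.eS), ⟨T.G_id, T.eS_mem⟩⟩ ∧
      (∀ (α f) (hα : α ∈ T.G) (hf : f ∈ T.S),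
        D.inv ⟨(α, f), ⟨hα, hf⟩⟩ =
          ⟨(T.ginv α, T.linv f), ⟨T.G_inv_mem α hα, T.linv_mem f hf⟩⟩) := by
  refine ⟨{
    lp := fun x y => ⟨(x.1.1 ∘ y.1.1, x.1.2 ∘ y.1.2),
      ⟨T.G_comp _ x.2.1 _ y.2.1, T.S_comp _ x.2.2 _ y.2.2⟩⟩
    rp := fun x y => ⟨(x.1.1 ∘ y.1.1, T.φ x.1.2 ∘ y.1.2),
      ⟨T.G_comp _ x.2.1 _ y.2.1, T.φS_S _ x.2.2 _ y.2.2⟩⟩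
    e := ⟨(id, T.eS), ⟨T.G_id, T.eS_mem⟩⟩
    inv := fun x => ⟨(T.ginv x.1.1, T.linv x.1.2),
      ⟨T.G_inv_mem _ x.2.1, T.linv_mem _ x.2.2⟩⟩
    d1 := fun x y z => by apply Subtype.ext; simp [Function.comp_assoc]
    d2 := fun x y z => by
      apply Subtype.ext
      refine Prod.ext (by simp [Function.comp_assoc]) ?_
      show (x.1.2 ∘ y.1.2) ∘ z.1.2 = x.1.2 ∘ (T.φ y.1.2 ∘ z.1.2)
      rw [← Function.comp_assoc, T.comp_φ _ x.2.2 _ y.2.2]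
    d3 := fun x y z => by apply Subtype.ext; simp [Function.comp_assoc]
    d4 := fun x y z => by
      apply Subtype.ext
      refine Prod.ext rfl ?_
      show T.φ (x.1.2 ∘ y.1.2) ∘ z.1.2 = T.φ (T.φ x.1.2 ∘ y.1.2) ∘ z.1.2
      rw [T.φ_comp _ x.2.2 _ y.2.2, T.φ_φ _ x.2.2 _ y.2.2]
    d5 := fun x y z => by
      apply Subtype.ext
      refine Prod.ext (by simp [Function.comp_assoc]) ?_
      show T.φ (T.φ x.1.2 ∘ y.1.2) ∘ z.1.2 = T.φ x.1.2 ∘ (T.φ y.1.2 ∘ z.1.2)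
      rw [T.φ_φ _ x.2.2 _ y.2.2, Function.comp_assoc]
    lp_e := fun x => by
      apply Subtype.ext
      exact Prod.ext (by simp) (T.right_unit _ x.2.2)
    e_rp := fun x => by
      apply Subtype.ext
      exact Prod.ext (by simp) (T.φ_eS _ x.2.2)
    rp_e := fun x => by
      apply Subtype.ext
      exact Prod.ext (by simp) (T.eS_comm _ x.2.2).symm
    inv_lp := fun x => by
      apply Subtype.ext
      exact Prod.ext (T.G_inv_left _ x.2.1) (T.linv_left _ x.2.2)
    rp_inv := fun x => by
      apply Subtype.ext
      exact Prod.ext (T.G_inv_right _ x.2.1) (T.φ_linv _ x.2.2)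
  }, ?_, ?_, rfl, ?_⟩ <;> intros <;> rfl
end
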